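/- Let M(μ) = log₂(μ - 1) - μ·log₂(1 - 1/μ) for μ > 1. Then μ·(M(μ) - log₂ μ - log₂ e) tends to -(log₂ e)/2 as μ → ∞; in particular M(μ) = log₂ μ + log₂ e - (log₂ e)/(2μ) + o(1/μ) as μ → ∞. -/

import Mathlib

/-!
With `t = 1/μ`, the quantity `μ * (maxEntropy μ - log₂ μ - log₂ e)` equals
`((t - 1) * ln (1 - t) - t) / (t² * ln 2)`. Both numerator and denominator vanish to second order
at `t = 0`, and two applications of l'Hôpital's rule give the limit `-1 / (2 ln 2)`. The little-o
form is this limit divided by `μ`.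
-/

/-- Maximal Shannon entropy (in bits) among distributions with guessing entropy `μ`. -/
noncomputable def maxEntropy (μ : ℝ) : ℝ :=
  Real.logb 2 (μ - 1) - μ * Real.logb 2 (1 - 1/μ)

open Filter Real Topology Asymptotics

lemma hasDerivAt_log_one_sub {x : ℝ} (hx : x ≠ 1) :
    HasDerivAt (fun t => log (1 - t)) (-1 / (1 - x)) x := by
  simpa using ((hasDerivAt_id x).const_sub 1).log (sub_ne_zero.2 hx.symm)

lemma hasDerivAt_sub_one_mul_log_one_sub_sub {x : ℝ} (hx : x ≠ 1) :
    HasDerivAt (fun t => (t - 1) * log (1 - t) - t) (log (1 - x)) x := by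
  have : 1 - x ≠ 0 := sub_ne_zero.2 hx.symm
  refine ((((hasDerivAt_id' x).sub_const 1).mul (hasDerivAt_log_one_sub hx)).sub
    (hasDerivAt_id' x)).congr_deriv ?_
  field_simp
  ring

lemma tendsto_log_one_sub_div_two_mul :
    Tendsto (fun t => log (1 - t) / (2 * t)) (𝓝[≠] 0) (𝓝 (-(1 / 2))) := by
  have hne : ∀ᶠ x in 𝓝 (0 : ℝ), x ≠ 1 := eventually_ne_nhds zero_ne_one
  refine HasDerivAt.lhopital_zero_nhds (f' := fun x => -1 / (1 - x)) (g' := fun _ => 2)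
    (hne.mono fun x hx => hasDerivAt_log_one_sub hx)
    (.of_forall fun x => by simpa using (hasDerivAt_id x).const_mul 2)
    (.of_forall fun _ => two_ne_zero) ?_ ?_ ?_
  · have : ContinuousAt (fun t : ℝ => log (1 - t)) 0 := by fun_prop (disch := norm_num)
    simpa using this.tendsto
  · have : ContinuousAt (fun t : ℝ => 2 * t) 0 := by fun_prop
    simpa using this.tendsto
  · have : ContinuousAt (fun x : ℝ => -1 / (1 - x) / 2) 0 := by fun_prop (disch := norm_num)
    convert this.tendsto using 2
    norm_num

lemma tendsto_sub_one_mul_log_one_sub_sub_div_sq :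
    Tendsto (fun t => ((t - 1) * log (1 - t) - t) / t ^ 2) (𝓝[≠] 0) (𝓝 (-(1 / 2))) := by
  have hne : ∀ᶠ x in 𝓝[≠] (0 : ℝ), x ≠ 1 :=
    eventually_nhdsWithin_of_eventually_nhds (eventually_ne_nhds zero_ne_one)
  refine HasDerivAt.lhopital_zero_nhdsNE (f' := fun x => log (1 - x)) (g' := fun x => 2 * x)
    (hne.mono fun x hx => hasDerivAt_sub_one_mul_log_one_sub_sub hx)
    (.of_forall fun x => by simpa using hasDerivAt_pow 2 x)
    (eventually_mem_nhdsWithin.mono fun x hx => mul_ne_zero two_ne_zero hx) ?_ ?_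
    tendsto_log_one_sub_div_two_mul
  · have : ContinuousAt (fun t : ℝ => (t - 1) * log (1 - t) - t) 0 := by
      fun_prop (disch := norm_num)
    simpa using this.tendsto.mono_left nhdsWithin_le_nhds
  · have : ContinuousAt (fun t : ℝ => t ^ 2) 0 := by fun_prop
    simpa using this.tendsto.mono_left nhdsWithin_le_nhds

lemma mul_maxEntropy_sub_eq {μ : ℝ} (hμ : 1 < μ) :
    μ * (maxEntropy μ - logb 2 μ - logb 2 (exp 1)) =
      ((μ⁻¹ - 1) * log (1 - μ⁻¹) - μ⁻¹) / (μ⁻¹) ^ 2 / log 2 := by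
  have hμ0 : μ ≠ 0 := by positivity
  have hsplit : log (μ - 1) = log (1 - μ⁻¹) + log μ := by
    rw [← log_mul (by simp [sub_eq_zero, hμ.ne']) hμ0]
    field_simp
  rw [maxEntropy, logb, logb, logb, logb, hsplit, log_exp, one_div]
  field_simp
  ring

lemma isLittleO_sub_div_of_tendsto_mul {f : ℝ → ℝ} {c : ℝ}
    (h : Tendsto (fun x => x * f x) atTop (𝓝 c)) :
    (fun x => f x - c / x) =o[atTop] fun x => 1 / x := by
  have : (fun x => x * f x - c) =o[atTop] fun _ => (1 : ℝ) :=
    (isLittleO_one_iff ℝ).2 (by simpa using h.sub_const c)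
  refine (this.mul_isBigO (isBigO_refl (fun x : ℝ => 1 / x) atTop)).congr' ?_ (by simp)
  filter_upwards [eventually_ne_atTop 0] with x hx
  field_simp

lemma tendsto_mul_maxEntropy_sub :
    Tendsto (fun μ => μ * (maxEntropy μ - logb 2 μ - logb 2 (exp 1))) atTop
      (𝓝 (-logb 2 (exp 1) / 2)) := by
  have hinv : Tendsto (fun μ : ℝ => μ⁻¹) atTop (𝓝[≠] 0) :=
    tendsto_inv_atTop_nhdsGT_zero.mono_right (nhdsWithin_mono _ fun _ hx => ne_of_gt hx)
  rw [show -logb 2 (exp 1) / 2 = -(1 / 2) / log 2 by rw [logb, log_exp]; ring]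
  refine ((tendsto_sub_one_mul_log_one_sub_sub_div_sq.comp hinv).div_const _).congr' ?_
  filter_upwards [eventually_gt_atTop 1] with μ hμ using (mul_maxEntropy_sub_eq hμ).symm

theorem maxEntropy_asymptotic :
    Filter.Tendsto
      (fun μ : ℝ => μ * (maxEntropy μ - Real.logb 2 μ - Real.logb 2 (Real.exp 1)))
      Filter.atTop (nhds (-(Real.logb 2 (Real.exp 1)) / 2)) ∧
    (fun μ : ℝ =>
        maxEntropy μ - (Real.logb 2 μ + Real.logb 2 (Real.exp 1) - Real.logb 2 (Real.exp 1) / (2 * μ)))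
      =o[Filter.atTop] fun μ : ℝ => 1 / μ :=
  ⟨tendsto_mul_maxEntropy_sub,
    (isLittleO_sub_div_of_tendsto_mul tendsto_mul_maxEntropy_sub).congr_left fun μ => by ring⟩
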